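/- arXiv:1710.10187 — 2 statements merged into one kernel-verified Lean document; each statement's English description precedes it below -/
import Mathlib

section
/- Let X be a real Banach space and Φ : X → ℝ ∪ {+∞} proper, lsc, convex, x̄ ∈ dom Φ, ε ≥ 0, λ ∈ ℝ. Assume the sublevel set [Φ ≤ λ] is empty and ε ≥ Φ(x̄) − λ. Then for every v in the negative polar cone of ∂_ε Φ(x̄) (i.e., ⟨x*, v⟩ ≤ 0 for all x* ∈ ∂_ε Φ(x̄), with ∂_ε Φ(x̄) nonempty), one has Φ(x̄ + t v) ≤ Φ(x̄) for all t > 0; equivalently, v belongs to the recession cone of the sublevel set [Φ ≤ Φ(x̄)]. -/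
open Set Topology Filter

/-- The ε-subdifferential of `Φ` at `x`. -/
def SubdiffAt {X : Type*} [NormedAddCommGroup X] [NormedSpace ℝ X]
    (Φ : X → EReal) (x : X) (ε : ℝ) : Set (X →L[ℝ] ℝ) :=
  {p | ∀ u : X, Φ x + ((p (u - x) : ℝ) : EReal) ≤ Φ u + ((ε : ℝ) : EReal)}

/-
Suppose `Φ (x̄ + s v) > Φ x̄ = c` for some `s > 0`. Lower semicontinuity on the compact segment
`x̄ + [0, s] v` and `Φ > λ ≥ c - ε` give a level `μ > c - ε` that `Φ` exceeds there. Hence, for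
`T` large, the segment in `X × ℝ` from `(x̄, c - ε)` to `(x̄ + T v, c)` misses the closed convex
epigraph of `Φ`: early on it is below `μ`, later it would put `x̄ + s v` in the convex sublevel set
`{Φ ≤ c}`. Strict separation (Hahn–Banach) of the segment from the epigraph yields an affine
minorant of `Φ` through `(x̄, c - ε)` that decreases along `v`, i.e. some `q ∈ ∂_ε Φ(x̄)` with
`q v > 0`.
-/

def realEpigraph {X : Type*} (Φ : X → EReal) : Set (X × ℝ) := {z | Φ z.1 ≤ z.2}

theorem isClosed_realEpigraph {X : Type*} [TopologicalSpace X] {Φ : X → EReal}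
    (hΦ : LowerSemicontinuous Φ) : IsClosed (realEpigraph Φ) :=
  hΦ.isClosed_epigraph.preimage
    (continuous_fst.prodMk (continuous_coe_real_ereal.comp continuous_snd))

theorem IsCompact.exists_lt_forall_lt_of_lowerSemicontinuousOn {α : Type*}
    [TopologicalSpace α] {f : α → EReal} {K : Set α} (hK : IsCompact K)
    (hf : LowerSemicontinuousOn f K) {a : ℝ} (h : ∀ x ∈ K, (a : EReal) < f x) :
    ∃ b : ℝ, a < b ∧ ∀ x ∈ K, (b : EReal) < f x := by
  rcases K.eq_empty_or_nonempty with rfl | hne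
  · exact ⟨a + 1, by linarith, by simp⟩
  obtain ⟨x₀, hx₀, hmin⟩ := hf.exists_isMinOn hne hK
  obtain ⟨b, hab, hb⟩ := EReal.lt_iff_exists_real_btwn.mp (h x₀ hx₀)
  exact ⟨b, by exact_mod_cast hab, fun x hx => hb.trans_le (hmin hx)⟩

section Module

variable {X : Type*} [AddCommGroup X] [Module ℝ X]

theorem convex_realEpigraph {Φ : X → EReal}
    (hΦ : ∀ x y : X, ∀ t : ℝ, 0 ≤ t → t ≤ 1 →
      Φ (t • x + (1 - t) • y) ≤ ((t : ℝ) : EReal) * Φ x + (((1 - t : ℝ)) : EReal) * Φ y) :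
    Convex ℝ (realEpigraph Φ) := by
  intro z hz w hw a b ha hb hab
  obtain rfl : b = 1 - a := by linarith
  calc Φ (a • z.1 + (1 - a) • w.1)
      ≤ (a : EReal) * Φ z.1 + ((1 - a : ℝ) : EReal) * Φ w.1 := hΦ _ _ a ha (by linarith)
    _ ≤ (a : EReal) * z.2 + ((1 - a : ℝ) : EReal) * w.2 := by
        gcongr
        exacts [hz, hw]
    _ = ((a • z + (1 - a) • w).2 : ℝ) := by
        simp only [Prod.snd_add, Prod.smul_snd, smul_eq_mul]
        norm_cast

theorem convex_setOf_le_of_convex_realEpigraph {Φ : X → EReal}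
    (hE : Convex ℝ (realEpigraph Φ)) (m : ℝ) : Convex ℝ {x | Φ x ≤ m} := by
  intro x hx y hy a b ha hb hab
  simpa [realEpigraph, ← add_mul, hab] using hE (x := (x, m)) (y := (y, m)) hx hy ha hb hab

theorem Convex.add_smul_mem_of_le {S : Set X} (hS : Convex ℝ S) {x v : X} {s τ : ℝ}
    (hx : x ∈ S) (hτ : x + τ • v ∈ S) (hs : 0 ≤ s) (hsτ : s ≤ τ) : x + s • v ∈ S := by
  rcases hs.eq_or_lt with rfl | hs
  · simpa using hx
  have hτ0 : 0 < τ := hs.trans_le hsτ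
  have := hS.add_smul_mem hx hτ ⟨by positivity, (div_le_one hτ0).mpr hsτ⟩
  rwa [smul_smul, div_mul_cancel₀ _ hτ0.ne'] at this

theorem disjoint_segment_realEpigraph {Φ : X → EReal} (hE : Convex ℝ (realEpigraph Φ))
    {x v : X} {c ε μ s T : ℝ} (hc : Φ x = c) (hε : 0 ≤ ε) (hs : 0 ≤ s)
    (hcs : (c : EReal) < Φ (x + s • v)) (hμ : ∀ τ ∈ Icc 0 s, (μ : EReal) < Φ (x + τ • v))
    (hT : 0 < T) (hsT : s * ε ≤ (μ - (c - ε)) * T) :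
    Disjoint (segment ℝ (x, c - ε) (x + T • v, c)) (realEpigraph Φ) := by
  rw [disjoint_left, segment_eq_image']
  rintro _ ⟨θ, ⟨hθ0, hθ1⟩, rfl⟩ hmem
  have hmem' : Φ (x + (θ * T) • v) ≤ ((c - ε + θ * ε : ℝ) : EReal) := by
    simpa [realEpigraph, mul_smul] using hmem
  -- Up to `x + s • v` the segment stays below the uniform level `μ`; beyond it, it stays below
  -- level `c`, and convexity of `{Φ ≤ c}` would pull `x + s • v` into that sublevel set.
  rcases le_total (θ * T) s with hle | hge
  · have := (hμ _ ⟨by positivity, hle⟩).trans_le hmem'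
    norm_cast at this
    nlinarith [mul_le_mul_of_nonneg_right hle hε, mul_lt_mul_of_pos_right this hT]
  · have hle : Φ (x + (θ * T) • v) ≤ c :=
      hmem'.trans (by exact_mod_cast (by nlinarith : c - ε + θ * ε ≤ c))
    exact hcs.not_ge <|
      (convex_setOf_le_of_convex_realEpigraph hE c).add_smul_mem_of_le hc.le hle hs hge

end Module

section Normed

variable {X : Type*} [NormedAddCommGroup X] [NormedSpace ℝ X]

theorem mem_subdiffAt_of_forall_mem_realEpigraph {Φ : X → EReal} {x : X} {c ε : ℝ}
    (hc : Φ x = c) {q : X →L[ℝ] ℝ}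
    (h : ∀ z ∈ realEpigraph Φ, c + q (z.1 - x) ≤ z.2 + ε) : q ∈ SubdiffAt Φ x ε := by
  intro u
  rw [hc]
  cases hu : Φ u with
  | bot =>
    have := h (u, c + q (u - x) - ε - 1) (by simp [realEpigraph, hu])
    linarith
  | top => simp
  | coe a => exact_mod_cast h (u, a) (by simp [realEpigraph, hu])

theorem exists_mem_subdiffAt_pos_of_disjoint {Φ : X → EReal}
    (hconv : Convex ℝ (realEpigraph Φ)) (hclosed : IsClosed (realEpigraph Φ))
    {x v : X} {c ε : ℝ} (hc : Φ x = c) (hε : 0 < ε)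
    (hdisj : Disjoint (segment ℝ (x, c - ε) (x + v, c)) (realEpigraph Φ)) :
    ∃ q ∈ SubdiffAt Φ x ε, 0 < q v := by
  have hK : IsCompact (segment ℝ (x, c - ε) (x + v, c)) := by
    rw [← convexHull_pair (𝕜 := ℝ)]; exact (toFinite _).isCompact_convexHull ℝ
  obtain ⟨F, u, w, hFK, huw, hFE⟩ :=
    geometric_hahn_banach_compact_closed (convex_segment _ _) hK hconv hclosed hdisj
  set p : X →L[ℝ] ℝ := F.comp (ContinuousLinearMap.inl ℝ X ℝ)
  set r : ℝ := F (0, 1)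
  have hF : ∀ y μ, F (y, μ) = p y + μ * r := by
    intro y μ
    rw [show (y, μ) = (y, (0 : ℝ)) + μ • ((0 : X), (1 : ℝ)) by simp, map_add, map_smul]
    rfl
  have hA := hFK _ (left_mem_segment ℝ _ _)
  have hB := hFK _ (right_mem_segment ℝ _ _)
  have hx := hFE (x, c) (by simp [realEpigraph, hc])
  rw [hF] at hA hB hx
  rw [map_add] at hB
  -- `(x, c - ε)` lies below `(x, c) ∈ epi Φ`, so the separating functional increases in the
  -- vertical direction and can be normalised to the affine minorant `c + q (· - x) - ε`.
  have hr : 0 < r := pos_of_mul_pos_right (by linarith : 0 < ε * r) hε.le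
  refine ⟨(-r⁻¹) • p, mem_subdiffAt_of_forall_mem_realEpigraph hc fun z hz => ?_, ?_⟩
  · have hz := hFE z hz
    rw [← Prod.mk.eta (p := z), hF] at hz
    have key : (c - ε - z.2) * r ≤ p z.1 - p x := by linarith
    simp only [smul_apply, smul_eq_mul, neg_mul, inv_mul_eq_div, map_sub]
    linarith [(le_div_iff₀ hr).mpr key, sub_div (p z.1) (p x) r]
  · simp only [smul_apply, smul_eq_mul, neg_mul, neg_pos]
    exact mul_neg_of_pos_of_neg (inv_pos.mpr hr) (by linarith)

end Normed

theorem stmt8_general {X : Type*} [NormedAddCommGroup X] [NormedSpace ℝ X]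
    (Φ : X → EReal)
    (hconv : ∀ x y : X, ∀ t : ℝ, 0 ≤ t → t ≤ 1 →
      Φ (t • x + (1 - t) • y) ≤ ((t : ℝ) : EReal) * Φ x + (((1 - t : ℝ)) : EReal) * Φ y)
    (hlsc : LowerSemicontinuous Φ)
    (xb : X) (c : ℝ) (hc : Φ xb = (c : EReal))
    (lam : ℝ) (hempty : ∀ u : X, ¬ (Φ u ≤ ((lam : ℝ) : EReal)))
    (ε : ℝ) (hε : c - lam ≤ ε)
    (v : X) (hv : ∀ p ∈ SubdiffAt Φ xb ε, p v ≤ 0) :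
    ∀ t : ℝ, 0 < t → Φ (xb + t • v) ≤ Φ xb := by
  intro s hs
  by_contra hgt
  rw [not_le, hc] at hgt
  have hlam : lam < c := by exact_mod_cast hc ▸ not_le.mp (hempty xb)
  have hE := convex_realEpigraph hconv
  obtain ⟨μ, hlamμ, hμ⟩ := isCompact_Icc.exists_lt_forall_lt_of_lowerSemicontinuousOn
    ((hlsc.comp (g := fun τ : ℝ => xb + τ • v) (by fun_prop)).lowerSemicontinuousOn (Icc 0 s))
    fun τ _ => not_le.mp (hempty (xb + τ • v))
  have hgap : 0 < μ - (c - ε) := by linarith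
  set T := s * ε / (μ - (c - ε))
  have hT : 0 < T := div_pos (mul_pos hs (by linarith)) hgap
  have hdisj := disjoint_segment_realEpigraph (ε := ε) hE hc (by linarith) hs.le hgt hμ hT
    (mul_div_cancel₀ _ hgap.ne').ge
  obtain ⟨q, hq, hqv⟩ :=
    exists_mem_subdiffAt_pos_of_disjoint hE (isClosed_realEpigraph hlsc) hc (by linarith) hdisj
  rw [map_smul, smul_eq_mul] at hqv
  exact (hv q hq).not_gt (pos_of_mul_pos_right hqv hT.le)

theorem stmt8 {X : Type*} [NormedAddCommGroup X] [NormedSpace ℝ X] [CompleteSpace X]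
    (Φ : X → EReal)
    (hproper : ∃ z, Φ z ≠ ⊤) (hbot : ∀ z, Φ z ≠ ⊥)
    (hconv : ∀ x y : X, ∀ t : ℝ, 0 ≤ t → t ≤ 1 →
      Φ (t • x + (1 - t) • y) ≤ ((t : ℝ) : EReal) * Φ x + (((1 - t : ℝ)) : EReal) * Φ y)
    (hlsc : LowerSemicontinuous Φ)
    (xb : X) (c : ℝ) (hc : Φ xb = (c : EReal))
    (lam : ℝ) (hempty : ∀ u : X, ¬ (Φ u ≤ ((lam : ℝ) : EReal)))
    (ε : ℝ) (hε : c - lam ≤ ε)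
    (hne : (SubdiffAt Φ xb ε).Nonempty)
    (v : X) (hv : ∀ p ∈ SubdiffAt Φ xb ε, p v ≤ 0) :
    ∀ t : ℝ, 0 < t → Φ (xb + t • v) ≤ Φ xb :=
  stmt8_general Φ hconv hlsc xb c hc lam hempty ε hε v hv
end

section
/- Let f : ℝⁿ → ℝ ∪ {+∞} be a proper, lsc, convex, symmetric function, λ : Sⁿ → ℝⁿ the ordered eigenvalue map on symmetric matrices. Then the recession functions satisfy (f ∘ λ)^∞ = f^∞ ∘ λ, where for a proper lsc convex function g, g^∞(v) := sup_{t>0}(g(x₀ + tv) − g(x₀))/t for any x₀ ∈ dom g. -/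
open Set Topology Filter Matrix

/-- The eigenvalues of a real symmetric matrix arranged in non-increasing order. -/
noncomputable def eigVec {n : ℕ} (A : Matrix (Fin n) (Fin n) ℝ) (hA : A.IsHermitian) :
    Fin n → ℝ :=
  fun i => (hA.eigenvalues ∘ (Tuple.sort hA.eigenvalues)) i.rev

/-- The spectral function `F = f ∘ λ`, extended by `+∞` off the symmetric matrices. -/
noncomputable def specFun {n : ℕ} (f : (Fin n → ℝ) → EReal)
    (A : Matrix (Fin n) (Fin n) ℝ) : EReal :=
  if h : A.IsHermitian then f (eigVec A h) else ⊤

/-!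
Both sides are suprema of difference quotients, so it suffices to show that for every real `K`
the bound `F (X₀ + t • V) ≤ c + t * K` for all `t > 0` holds iff `f (x₀ + t • λ V) ≤ d + t * K`
for all `t > 0`. For a closed convex function such a slope bound does not depend on the base
point, so `x₀` may be replaced by `λ X₀`. Ky Fan's inequality `⟪a, λ (A + t • B)⟫ ≤ ⟪a, λ A⟫ +
t * ⟪a, λ B⟫` for antitone weights `a` says that `λ (X₀ + t • V)` is majorized by
`λ X₀ + t • λ V`, and convex symmetric functions are monotone for majorization (the smaller vector
lies in the convex hull of the permutations of the larger one). Conversely, the same inequality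
shows `λ (X₀ + r • V) / r → λ V`, and lower semicontinuity lets the bound pass to the limit.
-/

lemma EReal.coe_mul_add_coe_one_sub_mul_self {t : ℝ} (ht₀ : 0 ≤ t) (ht₁ : t ≤ 1) (r : EReal) :
    (t : EReal) * r + ((1 - t : ℝ) : EReal) * r = r := by
  rcases ht₀.eq_or_lt with rfl | ht₀
  · simp
  rcases ht₁.eq_or_lt with rfl | ht₁
  · simp
  have h₁ : (0 : ℝ) < 1 - t := by linarith
  induction r with
  | bot => rw [EReal.coe_mul_bot_of_pos ht₀, EReal.coe_mul_bot_of_pos h₁]; rfl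
  | coe r => norm_cast; ring
  | top => rw [EReal.coe_mul_top_of_pos ht₀, EReal.coe_mul_top_of_pos h₁]; rfl

lemma EReal.inv_mul_add_div_le_coe_iff {t : ℝ} (ht : 0 < t) (c K : ℝ) (z : EReal) :
    ((t⁻¹ : ℝ) : EReal) * z + (((-c) / t : ℝ) : EReal) ≤ (K : EReal) ↔
      z ≤ ((c + t * K : ℝ) : EReal) := by
  induction z with
  | bot => simp [EReal.coe_mul_bot_of_pos (inv_pos.mpr ht)]
  | coe r =>
    norm_cast
    rw [show t⁻¹ * r + -c / t = (r - c) / t by ring, div_le_iff₀ ht]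
    constructor <;> intro h <;> linarith
  | top =>
    rw [EReal.coe_mul_top_of_pos (inv_pos.mpr ht), EReal.top_add_coe]
    simp only [top_le_iff, EReal.coe_ne_top]

lemma EReal.eq_of_forall_le_coe_iff {x y : EReal} (h : ∀ K : ℝ, x ≤ K ↔ y ≤ K) : x = y :=
  le_antisymm (EReal.le_of_forall_lt_iff_le.mp fun K hK => (h K).mpr hK.le)
    (EReal.le_of_forall_lt_iff_le.mp fun K hK => (h K).mp hK.le)

lemma iSup_slope_le_coe_iff (φ : ℝ → EReal) (c K : ℝ) :
    (⨆ t ∈ Ioi (0 : ℝ), ((t⁻¹ : ℝ) : EReal) * φ t + (((-c) / t : ℝ) : EReal)) ≤ (K : EReal) ↔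
      ∀ t, 0 < t → φ t ≤ ((c + t * K : ℝ) : EReal) := by
  simp only [iSup₂_le_iff, mem_Ioi]
  exact forall₂_congr fun t ht => EReal.inv_mul_add_div_le_coe_iff ht c K (φ t)

section ConvexEReal

def ConvexEReal {E : Type*} [AddCommGroup E] [Module ℝ E] (f : E → EReal) : Prop :=
  ∀ x y : E, ∀ t : ℝ, 0 ≤ t → t ≤ 1 →
    f (t • x + (1 - t) • y) ≤ (t : EReal) * f x + ((1 - t : ℝ) : EReal) * f y

lemma ConvexEReal.convex_sublevel {E : Type*} [AddCommGroup E] [Module ℝ E] {f : E → EReal}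
    (hf : ConvexEReal f) (r : EReal) : Convex ℝ {z | f z ≤ r} := by
  intro x hx y hy a b ha hb hab
  obtain rfl : b = 1 - a := by linarith
  calc f (a • x + (1 - a) • y) ≤ (a : EReal) * f x + ((1 - a : ℝ) : EReal) * f y :=
        hf x y a ha (by linarith)
    _ ≤ (a : EReal) * r + ((1 - a : ℝ) : EReal) * r :=
        add_le_add (mul_le_mul_of_nonneg_left hx (by exact_mod_cast ha))
          (mul_le_mul_of_nonneg_left hy (by exact_mod_cast hb))
    _ = r := EReal.coe_mul_add_coe_one_sub_mul_self ha (by linarith) r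

lemma LowerSemicontinuous.le_of_tendsto {α γ ι : Type*} [TopologicalSpace α] [LinearOrder γ]
    [TopologicalSpace γ] [ClosedIciTopology γ] {f : α → γ} (hf : LowerSemicontinuous f)
    {l : Filter ι} [l.NeBot] {z : ι → α} {β : ι → γ} {p : α} {b : γ}
    (hz : Tendsto z l (𝓝 p)) (hβ : Tendsto β l (𝓝 b)) (h : ∀ᶠ i in l, f (z i) ≤ β i) :
    f p ≤ b :=
  hf.isClosed_epigraph.mem_of_tendsto (hz.prodMk_nhds hβ) h

variable {E : Type*} [AddCommGroup E] [Module ℝ E] [TopologicalSpace E] [IsTopologicalAddGroup E]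
  [ContinuousSMul ℝ E] {f : E → EReal}

/-- `p + s • u` is the limit of the convex combinations `(s / r) • a r + (1 - s / r) • p`, whose
values convexity bounds by `c + s * K + (s / r) * (B - c)`. -/
lemma ConvexEReal.le_add_smul_of_tendsto (hf : ConvexEReal f) (hlsc : LowerSemicontinuous f)
    {p u : E} {c B K : ℝ} (hp : f p = c) {a : ℝ → E}
    (ha : Tendsto (fun r => r⁻¹ • a r) atTop (𝓝 u))
    (hfa : ∀ r, 0 < r → f (a r) ≤ ((B + r * K : ℝ) : EReal)) {s : ℝ} (hs : 0 < s) :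
    f (p + s • u) ≤ ((c + s * K : ℝ) : EReal) := by
  have hθ : Tendsto (fun r : ℝ => s * r⁻¹) atTop (𝓝 0) := by
    simpa using tendsto_inv_atTop_zero.const_mul s
  have hz : Tendsto (fun r => (s * r⁻¹) • a r + (1 - s * r⁻¹) • p) atTop (𝓝 (p + s • u)) := by
    have := (ha.const_smul s).add ((tendsto_const_nhds (x := (1 : ℝ)).sub hθ).smul_const p)
    simp only [smul_smul, sub_zero, one_smul] at this
    rwa [add_comm]
  have hβ : Tendsto (fun r => ((s * r⁻¹ * (B + r * K) + (1 - s * r⁻¹) * c : ℝ) : EReal)) atTop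
      (𝓝 ((c + s * K : ℝ) : EReal)) := by
    refine EReal.tendsto_coe.mpr ?_
    have := (hθ.mul_const (B - c)).const_add (c + s * K)
    rw [zero_mul, add_zero] at this
    refine this.congr' ((eventually_gt_atTop 0).mono fun r hr => ?_)
    field_simp
    ring
  refine hlsc.le_of_tendsto hz hβ ((eventually_ge_atTop s).mono fun r hr => ?_)
  have hr₀ : 0 < r := hs.trans_le hr
  have hθ₀ : 0 ≤ s * r⁻¹ := by positivity
  have hθ₁ : s * r⁻¹ ≤ 1 := by rw [← div_eq_mul_inv, div_le_one hr₀]; exact hr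
  calc f ((s * r⁻¹) • a r + (1 - s * r⁻¹) • p)
      ≤ ((s * r⁻¹ : ℝ) : EReal) * f (a r) + ((1 - s * r⁻¹ : ℝ) : EReal) * f p :=
        hf _ _ _ hθ₀ hθ₁
    _ ≤ ((s * r⁻¹ : ℝ) : EReal) * ((B + r * K : ℝ) : EReal) + ((1 - s * r⁻¹ : ℝ) : EReal) * c := by
        rw [hp]
        exact add_le_add_left (mul_le_mul_of_nonneg_left (hfa r hr₀) (by exact_mod_cast hθ₀)) _
    _ = ((s * r⁻¹ * (B + r * K) + (1 - s * r⁻¹) * c : ℝ) : EReal) := by norm_cast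

lemma tendsto_inv_smul_add_smul (q u : E) :
    Tendsto (fun r : ℝ => r⁻¹ • (q + r • u)) atTop (𝓝 u) := by
  have := ((tendsto_inv_atTop_zero (𝕜 := ℝ)).smul_const q).add_const u
  rw [zero_smul, zero_add] at this
  refine this.congr' ((eventually_gt_atTop 0).mono fun r hr => ?_)
  simp only [smul_add, smul_smul, inv_mul_cancel₀ hr.ne', one_smul]

lemma ConvexEReal.forall_le_add_smul_iff (hf : ConvexEReal f) (hlsc : LowerSemicontinuous f)
    {p q u : E} {c d K : ℝ} (hp : f p = c) (hq : f q = d) :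
    (∀ s, 0 < s → f (p + s • u) ≤ ((c + s * K : ℝ) : EReal)) ↔
      ∀ s, 0 < s → f (q + s • u) ≤ ((d + s * K : ℝ) : EReal) :=
  ⟨fun h _ => hf.le_add_smul_of_tendsto hlsc hq (tendsto_inv_smul_add_smul p u) h,
    fun h _ => hf.le_add_smul_of_tendsto hlsc hp (tendsto_inv_smul_add_smul q u) h⟩

end ConvexEReal

section Majorization

variable {n : ℕ}

def sortDesc {α : Type*} [LinearOrder α] (x : Fin n → α) : Equiv.Perm (Fin n) :=
  Fin.revPerm.trans (Tuple.sort x)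

lemma antitone_comp_sortDesc {α : Type*} [LinearOrder α] (x : Fin n → α) :
    Antitone (x ∘ sortDesc x) := fun _ _ hij =>
  Tuple.monotone_sort x (Fin.rev_le_rev.mpr hij)

/-- Rado: separate `x` from the hull by a functional `c`, sort `c`, and use the rearrangement
inequality. -/
theorem mem_convexHull_range_comp_perm {x y : Fin n → ℝ} (hx : Antitone x)
    (h : ∀ a, Antitone a → a ⬝ᵥ x ≤ a ⬝ᵥ y) :
    x ∈ convexHull ℝ (range fun σ : Equiv.Perm (Fin n) => y ∘ σ) := by
  by_contra hx'
  obtain ⟨φ, u, hφu, huφ⟩ := _root_.geometric_hahn_banach_closed_point (convex_convexHull ℝ _)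
    ((finite_range _).isCompact_convexHull (𝕜 := ℝ)).isClosed hx'
  set c : Fin n → ℝ := fun i => φ (Pi.single i 1)
  have hφ : ∀ z, φ z = c ⬝ᵥ z := fun z => by
    rw [dotProduct_comm]
    refine (φ.toLinearMap.pi_apply_eq_sum_univ z).trans (Finset.sum_congr rfl fun i _ => ?_)
    have hsingle : (fun j => if i = j then (1 : ℝ) else 0) = Pi.single i 1 := by
      funext j
      simp [Pi.single_apply, eq_comm]
    rw [smul_eq_mul, hsingle]
    rfl
  set τ := sortDesc c
  have hτ : Antitone (c ∘ τ) := antitone_comp_sortDesc c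
  have key : φ x ≤ φ (y ∘ τ.symm) := calc
    φ x = ∑ i, c (τ i) * x (τ i) := by rw [hφ]; exact (Equiv.sum_comp τ _).symm
    _ ≤ (c ∘ τ) ⬝ᵥ x := (hτ.monovary hx).sum_mul_comp_perm_le_sum_mul
    _ ≤ (c ∘ τ) ⬝ᵥ y := h _ hτ
    _ = φ (y ∘ τ.symm) := by
      rw [hφ]
      simpa [dotProduct] using Equiv.sum_comp τ (fun j => c j * y (τ.symm j))
  linarith [hφu _ (subset_convexHull ℝ _ ⟨τ.symm, rfl⟩)]

theorem ConvexEReal.le_of_forall_antitone_dotProduct_le {f : (Fin n → ℝ) → EReal}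
    (hf : ConvexEReal f) (hsymm : ∀ σ : Equiv.Perm (Fin n), ∀ x : Fin n → ℝ, f (x ∘ σ) = f x)
    {x y : Fin n → ℝ} (hx : Antitone x) (h : ∀ a, Antitone a → a ⬝ᵥ x ≤ a ⬝ᵥ y) :
    f x ≤ f y :=
  convexHull_min (range_subset_iff.mpr fun σ => (hsymm σ y).le) (hf.convex_sublevel (f y))
    (mem_convexHull_range_comp_perm hx h)

lemma tendsto_of_forall_antitone_dotProduct {ι : Type*} {l : Filter ι} {g : ι → Fin n → ℝ}
    {u : Fin n → ℝ} (h : ∀ a, Antitone a → Tendsto (fun i => a ⬝ᵥ g i) l (𝓝 (a ⬝ᵥ u))) :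
    Tendsto g l (𝓝 u) := by
  refine tendsto_pi_nhds.mpr fun k => ?_
  set p : Fin n → ℝ := fun i => if i ≤ k then 1 else 0
  set q : Fin n → ℝ := fun i => if i < k then 1 else 0
  have hp : Antitone p := fun i j hij => by
    simp only [p]; split_ifs with hj hi <;> first | exact absurd (hij.trans hj) hi | norm_num
  have hq : Antitone q := fun i j hij => by
    simp only [q]; split_ifs with hj hi <;> first | exact absurd (hij.trans_lt hj) hi | norm_num
  have hcoord : ∀ z : Fin n → ℝ, p ⬝ᵥ z - q ⬝ᵥ z = z k := by
    intro z
    have : p - q = Pi.single k 1 := by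
      funext i
      rcases lt_trichotomy i k with hik | rfl | hik
      · simp [p, q, hik, hik.le, hik.ne]
      · simp [p, q]
      · simp [p, q, not_le.mpr hik, not_lt.mpr hik.le, hik.ne']
    rw [← sub_dotProduct, this, single_one_dotProduct]
  simpa only [hcoord] using (h p hp).sub (h q hq)

end Majorization

section DoublyStochastic

variable {ι : Type*} [Fintype ι] [DecidableEq ι]

lemma sq_entries_mem_doublyStochastic {O : Matrix ι ι ℝ} (hO : O ∈ unitaryGroup ι ℝ) :
    Matrix.of (fun i j => O i j ^ 2) ∈ doublyStochastic ℝ ι := by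
  have hrow := congr_fun₂ (Matrix.mem_unitaryGroup_iff.mp hO)
  have hcol := congr_fun₂ (Matrix.mem_unitaryGroup_iff'.mp hO)
  refine mem_doublyStochastic_iff_sum.mpr ⟨fun i j => sq_nonneg _, fun i => ?_, fun j => ?_⟩
  · simpa [Matrix.mul_apply, sq] using hrow i i
  · simpa [Matrix.mul_apply, sq] using hcol j j

/-- By Birkhoff's theorem it suffices to check permutation matrices, where this is the
rearrangement inequality. -/
lemma dotProduct_mulVec_le_of_mem_doublyStochastic {a b : ι → ℝ} (hab : Monovary a b)
    {S : Matrix ι ι ℝ} (hS : S ∈ doublyStochastic ℝ ι) :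
    a ⬝ᵥ (S *ᵥ b) ≤ a ⬝ᵥ b := by
  rw [← SetLike.mem_coe, doublyStochastic_eq_convexHull_permMatrix] at hS
  refine convexHull_min ?_
    (convex_halfSpace_le (f := fun S : Matrix ι ι ℝ => a ⬝ᵥ S *ᵥ b) ?_ (a ⬝ᵥ b)) hS
  · rintro _ ⟨σ, rfl⟩
    simpa [permMatrix_mulVec, dotProduct] using hab.sum_mul_comp_perm_le_sum_mul (σ := σ)
  · constructor <;> intros <;> simp [add_mulVec, smul_mulVec, dotProduct_add]

end DoublyStochastic

section KyFan

variable {n : ℕ}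

lemma eigVec_antitone {A : Matrix (Fin n) (Fin n) ℝ} (hA : A.IsHermitian) :
    Antitone (eigVec A hA) :=
  antitone_comp_sortDesc hA.eigenvalues

lemma exists_unitary_conj_eq_diagonal_eigVec {M : Matrix (Fin n) (Fin n) ℝ}
    (hM : M.IsHermitian) :
    ∃ Q ∈ unitaryGroup (Fin n) ℝ, Qᴴ * M * Q = diagonal (eigVec M hM) := by
  set W : Matrix (Fin n) (Fin n) ℝ := (hM.eigenvectorUnitary : Matrix (Fin n) (Fin n) ℝ)
  set π := sortDesc hM.eigenvalues
  have hW : Wᴴ * W = 1 := Matrix.mem_unitaryGroup_iff'.mp hM.eigenvectorUnitary.2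
  have hMW : Wᴴ * M * W = diagonal hM.eigenvalues := by
    have h := hM.conjStarAlgAut_star_eigenvectorUnitary
    rw [Unitary.conjStarAlgAut_star_apply] at h
    exact h
  have hconj : ∀ N : Matrix (Fin n) (Fin n) ℝ,
      (W.submatrix id π)ᴴ * N * W.submatrix id π = (Wᴴ * N * W).submatrix π π := by
    intro N
    rw [conjTranspose_submatrix, ← submatrix_id_id N,
      ← submatrix_mul _ _ _ _ _ Function.bijective_id,
      ← submatrix_mul _ _ _ _ _ Function.bijective_id, submatrix_id_id]
  refine ⟨W.submatrix id π, Matrix.mem_unitaryGroup_iff'.mpr ?_, ?_⟩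
  · have h := hconj 1
    rw [Matrix.mul_one, Matrix.mul_one, hW, submatrix_one_equiv] at h
    exact h
  · rw [hconj, hMW, submatrix_diagonal_equiv]
    rfl

/-- The diagonal of `Qᴴ * M * Q` is `S *ᵥ λ M` for the doubly stochastic matrix `S` of squared
entries of `Qᴴ * P`, where `P` diagonalizes `M`. -/
lemma dotProduct_diag_conj_le {a : Fin n → ℝ} (ha : Antitone a) {M : Matrix (Fin n) (Fin n) ℝ}
    (hM : M.IsHermitian) {Q : Matrix (Fin n) (Fin n) ℝ} (hQ : Q ∈ unitaryGroup (Fin n) ℝ) :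
    a ⬝ᵥ (Qᴴ * M * Q).diag ≤ a ⬝ᵥ eigVec M hM := by
  obtain ⟨P, hP, hPM⟩ := exists_unitary_conj_eq_diagonal_eigVec hM
  set O := Qᴴ * P
  have hO : O ∈ unitaryGroup (Fin n) ℝ := mul_mem (Unitary.star_mem hQ) hP
  have hPP : P * Pᴴ = 1 := Matrix.mem_unitaryGroup_iff.mp hP
  have hconj : Qᴴ * M * Q = O * diagonal (eigVec M hM) * Oᴴ := by
    rw [← hPM]
    simp only [O, conjTranspose_mul, conjTranspose_conjTranspose, Matrix.mul_assoc]
    rw [← Matrix.mul_assoc P, hPP, Matrix.one_mul, ← Matrix.mul_assoc P, hPP, Matrix.one_mul]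
  have hdiag : (Qᴴ * M * Q).diag = Matrix.of (fun i j => O i j ^ 2) *ᵥ eigVec M hM := by
    ext i
    rw [hconj, diag_apply, Matrix.mul_apply]
    simp only [mul_diagonal, conjTranspose_apply, star_trivial, mulVec, dotProduct, of_apply]
    exact Finset.sum_congr rfl fun j _ => by ring
  rw [hdiag]
  exact dotProduct_mulVec_le_of_mem_doublyStochastic (ha.monovary (eigVec_antitone hM))
    (sq_entries_mem_doublyStochastic hO)

lemma dotProduct_diag_conj_add_smul (a : Fin n → ℝ) (Q A B : Matrix (Fin n) (Fin n) ℝ) (t : ℝ) :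
    a ⬝ᵥ (Qᴴ * (A + t • B) * Q).diag = a ⬝ᵥ (Qᴴ * A * Q).diag + t * a ⬝ᵥ (Qᴴ * B * Q).diag := by
  simp only [Matrix.mul_add, Matrix.add_mul, Matrix.mul_smul, Matrix.smul_mul, diag_add,
    diag_smul, dotProduct_add, dotProduct_smul, smul_eq_mul]

lemma dotProduct_eigVec_add_smul_le {a : Fin n → ℝ} (ha : Antitone a)
    {A B : Matrix (Fin n) (Fin n) ℝ} (hA : A.IsHermitian) (hB : B.IsHermitian) {t : ℝ}
    (ht : 0 ≤ t) :
    a ⬝ᵥ eigVec (A + t • B) (hA.add (hB.smul (.all t))) ≤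
      a ⬝ᵥ eigVec A hA + t * a ⬝ᵥ eigVec B hB := by
  obtain ⟨Q, hQ, hQM⟩ := exists_unitary_conj_eq_diagonal_eigVec (hA.add (hB.smul (.all t)))
  rw [← diag_diagonal (eigVec (A + t • B) _), ← hQM, dotProduct_diag_conj_add_smul]
  exact add_le_add (dotProduct_diag_conj_le ha hA hQ)
    (mul_le_mul_of_nonneg_left (dotProduct_diag_conj_le ha hB hQ) ht)

lemma smul_dotProduct_eigVec_le {a : Fin n → ℝ} (ha : Antitone a)
    {A B : Matrix (Fin n) (Fin n) ℝ} (hA : A.IsHermitian) (hB : B.IsHermitian) (t : ℝ) :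
    t * a ⬝ᵥ eigVec B hB ≤
      a ⬝ᵥ eigVec (A + t • B) (hA.add (hB.smul (.all t))) + a ⬝ᵥ eigVec (-A) hA.neg := by
  obtain ⟨Q, hQ, hQB⟩ := exists_unitary_conj_eq_diagonal_eigVec hB
  have h₁ := dotProduct_diag_conj_le ha (hA.add (hB.smul (.all t))) hQ
  have h₂ := dotProduct_diag_conj_le ha hA.neg hQ
  rw [dotProduct_diag_conj_add_smul, hQB, diag_diagonal] at h₁
  have hneg : a ⬝ᵥ (Qᴴ * -A * Q).diag = -(a ⬝ᵥ (Qᴴ * A * Q).diag) := by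
    simp [dotProduct_neg]
  linarith

theorem ConvexEReal.apply_eigVec_add_smul_le {f : (Fin n → ℝ) → EReal} (hf : ConvexEReal f)
    (hsymm : ∀ σ : Equiv.Perm (Fin n), ∀ x : Fin n → ℝ, f (x ∘ σ) = f x)
    {A B : Matrix (Fin n) (Fin n) ℝ} (hA : A.IsHermitian) (hB : B.IsHermitian) {t : ℝ}
    (ht : 0 ≤ t) :
    f (eigVec (A + t • B) (hA.add (hB.smul (.all t)))) ≤ f (eigVec A hA + t • eigVec B hB) :=
  hf.le_of_forall_antitone_dotProduct_le hsymm (eigVec_antitone _) fun a ha => by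
    rw [dotProduct_add, dotProduct_smul, smul_eq_mul]
    exact dotProduct_eigVec_add_smul_le ha hA hB ht

theorem tendsto_inv_smul_eigVec_add_smul {A B : Matrix (Fin n) (Fin n) ℝ} (hA : A.IsHermitian)
    (hB : B.IsHermitian) :
    Tendsto (fun r : ℝ => r⁻¹ • eigVec (A + r • B) (hA.add (hB.smul (.all r)))) atTop
      (𝓝 (eigVec B hB)) := by
  refine tendsto_of_forall_antitone_dotProduct fun a ha => ?_
  simp only [dotProduct_smul, smul_eq_mul]
  have hlow : Tendsto (fun r : ℝ => a ⬝ᵥ eigVec B hB - r⁻¹ * a ⬝ᵥ eigVec (-A) hA.neg) atTop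
      (𝓝 (a ⬝ᵥ eigVec B hB)) := by
    simpa using tendsto_const_nhds.sub
      ((tendsto_inv_atTop_zero (𝕜 := ℝ)).mul_const (a ⬝ᵥ eigVec (-A) hA.neg))
  have hup : Tendsto (fun r : ℝ => r⁻¹ * a ⬝ᵥ eigVec A hA + a ⬝ᵥ eigVec B hB) atTop
      (𝓝 (a ⬝ᵥ eigVec B hB)) := by
    simpa using ((tendsto_inv_atTop_zero (𝕜 := ℝ)).mul_const (a ⬝ᵥ eigVec A hA)).add_const _
  refine tendsto_of_tendsto_of_tendsto_of_le_of_le' hlow hup ?_ ?_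
  · filter_upwards [eventually_gt_atTop 0] with r hr
    have := smul_dotProduct_eigVec_le ha hA hB r
    rw [sub_le_iff_le_add, ← mul_add, le_inv_mul_iff₀ hr]
    exact this
  · filter_upwards [eventually_gt_atTop 0] with r hr
    calc r⁻¹ * a ⬝ᵥ eigVec (A + r • B) _
        ≤ r⁻¹ * (a ⬝ᵥ eigVec A hA + r * a ⬝ᵥ eigVec B hB) :=
          mul_le_mul_of_nonneg_left (dotProduct_eigVec_add_smul_le ha hA hB hr.le) (by positivity)
      _ = r⁻¹ * a ⬝ᵥ eigVec A hA + a ⬝ᵥ eigVec B hB := by field_simp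

end KyFan

theorem stmt10_general (n : ℕ) (f : (Fin n → ℝ) → EReal)
    (hconv : ∀ x y : Fin n → ℝ, ∀ t : ℝ, 0 ≤ t → t ≤ 1 →
      f (t • x + (1 - t) • y) ≤ ((t : ℝ) : EReal) * f x + (((1 - t : ℝ)) : EReal) * f y)
    (hlsc : LowerSemicontinuous f)
    (hsymm : ∀ σ : Equiv.Perm (Fin n), ∀ x : Fin n → ℝ, f (x ∘ σ) = f x)
    (X₀ V : Matrix (Fin n) (Fin n) ℝ) (hX₀ : X₀.IsHermitian) (hV : V.IsHermitian)
    (x₀ : Fin n → ℝ) (c d : ℝ)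
    (hFX₀ : specFun f X₀ = (c : EReal)) (hfx₀ : f x₀ = (d : EReal)) :
    (⨆ t ∈ Set.Ioi (0 : ℝ),
        (((t⁻¹ : ℝ) : EReal) * specFun f (X₀ + t • V) + (((-c) / t : ℝ) : EReal))) =
      ⨆ t ∈ Set.Ioi (0 : ℝ),
        (((t⁻¹ : ℝ) : EReal) * f (x₀ + t • eigVec V hV) + (((-d) / t : ℝ) : EReal)) := by
  have hf : ConvexEReal f := hconv
  have hw : f (eigVec X₀ hX₀) = c := by rwa [specFun, dif_pos hX₀] at hFX₀
  have hspec : ∀ t : ℝ,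
      specFun f (X₀ + t • V) = f (eigVec _ (hX₀.add (hV.smul (.all t)))) := fun _ => dif_pos _
  refine EReal.eq_of_forall_le_coe_iff fun K => ?_
  simp only [hspec]
  rw [iSup_slope_le_coe_iff, iSup_slope_le_coe_iff, ← hf.forall_le_add_smul_iff hlsc hw hfx₀]
  exact ⟨fun h _ => hf.le_add_smul_of_tendsto hlsc hw (tendsto_inv_smul_eigVec_add_smul hX₀ hV) h,
    fun h t ht => (hf.apply_eigVec_add_smul_le hsymm hX₀ hV ht.le).trans (h t ht)⟩

theorem stmt10 (n : ℕ) (f : (Fin n → ℝ) → EReal)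
    (hproper : ∃ z, f z ≠ ⊤) (hbot : ∀ z, f z ≠ ⊥)
    (hconv : ∀ x y : Fin n → ℝ, ∀ t : ℝ, 0 ≤ t → t ≤ 1 →
      f (t • x + (1 - t) • y) ≤ ((t : ℝ) : EReal) * f x + (((1 - t : ℝ)) : EReal) * f y)
    (hlsc : LowerSemicontinuous f)
    (hsymm : ∀ σ : Equiv.Perm (Fin n), ∀ x : Fin n → ℝ, f (x ∘ σ) = f x)
    (X₀ V : Matrix (Fin n) (Fin n) ℝ) (hX₀ : X₀.IsHermitian) (hV : V.IsHermitian)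
    (x₀ : Fin n → ℝ) (c d : ℝ)
    (hFX₀ : specFun f X₀ = (c : EReal)) (hfx₀ : f x₀ = (d : EReal)) :
    (⨆ t ∈ Set.Ioi (0 : ℝ),
        (((t⁻¹ : ℝ) : EReal) * specFun f (X₀ + t • V) + (((-c) / t : ℝ) : EReal))) =
      ⨆ t ∈ Set.Ioi (0 : ℝ),
        (((t⁻¹ : ℝ) : EReal) * f (x₀ + t • eigVec V hV) + (((-d) / t : ℝ) : EReal)) :=
  stmt10_general n f hconv hlsc hsymm X₀ V hX₀ hV x₀ c d hFX₀ hfx₀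
end
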